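/- (Exponential decay of the Lyapunov function.) Let A be a real symmetric positive definite m × m matrix with smallest eigenvalue λ₁(A) > 0, κ > 0, ε ∈ (0, π/2), and let w : ℝ → (Fin m → ℝ) satisfy sin ε ≤ w(t)_k ≤ 1 for all t and k. Suppose z : ℝ → (Fin m → ℝ) is differentiable in each coordinate and satisfies z'(t) = −κ A · diag(w(t)) · z(t) for all t. Then for all t ≥ 0, z(t)ᵀ A⁻¹ z(t) ≤ (z(0)ᵀ A⁻¹ z(0)) · exp(−κ sin ε · λ₁(A) · t). -/

import Mathlib

/-!
`V = zᵀ A⁻¹ z` is a Lyapunov function: along the flow `V' = -2κ zᵀ diag(w) z`, and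
`zᵀ diag(w) z ≥ sin ε ‖z‖² ≥ sin ε λ₁ V` because `λ₁ A⁻¹ ≤ 1` in the Loewner order
(apply the functional calculus to `t ↦ 1 - λ₁ / t`). Grönwall's inequality then gives the decay.
-/

open Matrix

open scoped MatrixOrder in
theorem Matrix.PosDef.mul_dotProduct_inv_mulVec_le {n : Type*} [Fintype n] [DecidableEq n]
    {A : Matrix n n ℝ} (hA : A.PosDef) {lam : ℝ} (hlam : ∀ i, lam ≤ hA.1.eigenvalues i)
    (x : n → ℝ) : lam * (x ⬝ᵥ A⁻¹ *ᵥ x) ≤ x ⬝ᵥ x := by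
  have hcont (f : ℝ → ℝ) : ContinuousOn f (spectrum ℝ A) := finite_real_spectrum.continuousOn f
  have hcfc : 1 - lam • A⁻¹ = cfc (fun t : ℝ => 1 - lam * t⁻¹) A := by
    rw [cfc_sub _ _ _ (hcont _) (hcont _), cfc_const_one ℝ A, cfc_const_mul _ _ _ (hcont _),
      cfc_ringInverse_id (R := ℝ) _ hA.isUnit, nonsing_inv_eq_ringInverse]
  have hpsd : (1 - lam • A⁻¹).PosSemidef := by
    rw [← nonneg_iff_posSemidef, hcfc]
    refine cfc_nonneg fun t ht => ?_
    rw [hA.1.spectrum_real_eq_range_eigenvalues] at ht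
    obtain ⟨i, rfl⟩ := ht
    rw [sub_nonneg, ← div_eq_mul_inv, div_le_one (hA.eigenvalues_pos i)]
    exact hlam i
  simpa [sub_mulVec, dotProduct_sub, smul_mulVec, sub_nonneg] using hpsd.dotProduct_mulVec_nonneg x

theorem Matrix.IsSymm.dotProduct_mulVec_comm {n R : Type*} [Fintype n] [CommSemiring R]
    {M : Matrix n n R} (hM : M.IsSymm) (u v : n → R) : u ⬝ᵥ M *ᵥ v = v ⬝ᵥ M *ᵥ u := by
  rw [dotProduct_mulVec, ← mulVec_transpose, hM.eq, dotProduct_comm]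

theorem Matrix.mul_dotProduct_self_le_dotProduct_diagonal_mulVec {n R : Type*} [Fintype n]
    [DecidableEq n] [CommRing R] [LinearOrder R] [IsStrictOrderedRing R] {a : R} {w : n → R}
    (hw : ∀ i, a ≤ w i) (x : n → R) : a * (x ⬝ᵥ x) ≤ x ⬝ᵥ diagonal w *ᵥ x := by
  simp only [dotProduct, mulVec_diagonal, Finset.mul_sum]
  refine Finset.sum_le_sum fun i _ => ?_
  nlinarith [hw i, mul_self_nonneg (x i)]

section Derivatives

variable {𝕜 m n : Type*} [NontriviallyNormedField 𝕜] [Fintype n] {t : 𝕜}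

theorem HasDerivAt.dotProduct {u v : 𝕜 → n → 𝕜} {u' v' : n → 𝕜} (hu : HasDerivAt u u' t)
    (hv : HasDerivAt v v' t) : HasDerivAt (fun s => u s ⬝ᵥ v s) (u' ⬝ᵥ v t + u t ⬝ᵥ v') t := by
  rw [hasDerivAt_pi] at hu hv
  unfold _root_.dotProduct
  rw [← Finset.sum_add_distrib]
  exact HasDerivAt.fun_sum fun i _ => (hu i).mul (hv i)

theorem HasDerivAt.mulVec (M : Matrix m n 𝕜) {u : 𝕜 → n → 𝕜} {u' : n → 𝕜}
    (hu : HasDerivAt u u' t) : HasDerivAt (fun s => M *ᵥ u s) (M *ᵥ u') t := by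
  rw [hasDerivAt_pi] at hu ⊢
  exact fun i => HasDerivAt.fun_sum fun j _ => (hu j).const_mul (M i j)

end Derivatives

theorem hasDerivAt_dotProduct_inv_mulVec_of_hasDerivAt_neg_smul {n : Type*} [Fintype n]
    [DecidableEq n] {A : Matrix n n ℝ} (hA : A.IsSymm) (hdet : IsUnit A.det)
    (D : Matrix n n ℝ) (κ : ℝ) {z : ℝ → n → ℝ} {t : ℝ}
    (hz : HasDerivAt z (-κ • (A * D) *ᵥ z t) t) :
    HasDerivAt (fun s => z s ⬝ᵥ A⁻¹ *ᵥ z s) (-(2 * κ) * (z t ⬝ᵥ D *ᵥ z t)) t := by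
  refine (hz.dotProduct (hz.mulVec A⁻¹)).congr_deriv ?_
  rw [hA.inv.dotProduct_mulVec_comm _ (z t), mulVec_smul, mulVec_mulVec, ← Matrix.mul_assoc,
    nonsing_inv_mul A hdet, Matrix.one_mul, dotProduct_smul, smul_eq_mul]
  ring

theorem le_mul_exp_of_hasDerivWithinAt_le_mul {f f' : ℝ → ℝ} {K a b : ℝ}
    (hf : ContinuousOn f (Set.Icc a b))
    (hf' : ∀ x ∈ Set.Ico a b, HasDerivWithinAt f (f' x) (Set.Ici x) x)
    (bound : ∀ x ∈ Set.Ico a b, f' x ≤ K * f x) :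
    ∀ x ∈ Set.Icc a b, f x ≤ f a * Real.exp (K * (x - a)) := by
  intro x hx
  have := le_gronwallBound_of_liminf_deriv_right_le hf
    (fun x hx _ hr => (hf' x hx).liminf_right_slope_le hr) le_rfl
    (fun x hx => (add_zero (K * f x)).symm ▸ bound x hx) x hx
  rwa [gronwallBound_ε0] at this

theorem lyapunov_exponential_decay_general
    {m : ℕ} (A : Matrix (Fin m) (Fin m) ℝ) (hA : A.PosDef)
    (lam1 : ℝ) (hlam1 : lam1 = ⨅ k, hA.1.eigenvalues k)
    (κ ε : ℝ) (hκ : 0 < κ) (hε : 0 < ε) (hε2 : ε < Real.pi / 2)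
    (w : ℝ → Fin m → ℝ) (hw : ∀ t k, Real.sin ε ≤ w t k ∧ w t k ≤ 1)
    (z zd : ℝ → Fin m → ℝ)
    (hz : ∀ t k, HasDerivAt (fun s => z s k) (zd t k) t)
    (hdyn : ∀ t, zd t = -κ • (A * Matrix.diagonal (w t)).mulVec (z t)) :
    ∀ t, 0 ≤ t →
      z t ⬝ᵥ A⁻¹.mulVec (z t)
        ≤ (z 0 ⬝ᵥ A⁻¹.mulVec (z 0)) * Real.exp (-(κ * Real.sin ε * lam1) * t) := by
  have hsin : 0 ≤ Real.sin ε :=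
    Real.sin_nonneg_of_nonneg_of_le_pi hε.le (by linarith [Real.pi_pos])
  have hlam : ∀ i, lam1 ≤ hA.1.eigenvalues i :=
    hlam1 ▸ fun i => ciInf_le (Finite.bddBelow_range _) i
  have hV (t : ℝ) : HasDerivAt (fun s => z s ⬝ᵥ A⁻¹ *ᵥ z s)
      (-(2 * κ) * (z t ⬝ᵥ diagonal (w t) *ᵥ z t)) t :=
    hasDerivAt_dotProduct_inv_mulVec_of_hasDerivAt_neg_smul
      (isHermitian_iff_isSymm.mp hA.1) ((isUnit_iff_isUnit_det A).mp hA.isUnit) _ κ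
      (hdyn t ▸ hasDerivAt_pi.mpr (hz t))
  have hbound (t : ℝ) :
      -(2 * κ) * (z t ⬝ᵥ diagonal (w t) *ᵥ z t)
        ≤ -(κ * Real.sin ε * lam1) * (z t ⬝ᵥ A⁻¹ *ᵥ z t) := by
    have hdiag := mul_dotProduct_self_le_dotProduct_diagonal_mulVec (fun k => (hw t k).1) (z t)
    have hinv := mul_le_mul_of_nonneg_left (hA.mul_dotProduct_inv_mulVec_le hlam (z t)) hsin
    have hq := (mul_nonneg hsin (dotProduct_self_star_nonneg (z t))).trans hdiag
    nlinarith
  intro t ht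
  simpa only [sub_zero] using le_mul_exp_of_hasDerivWithinAt_le_mul
    (fun s _ => (hV s).continuousAt.continuousWithinAt) (fun s _ => (hV s).hasDerivWithinAt)
    (fun s _ => hbound s) t ⟨ht, le_rfl⟩

/-- Exponential decay of the Lyapunov function: if `z' = −κ A diag(w) z` with
`A` symmetric positive definite (smallest eigenvalue `λ₁(A) > 0`) and
`sin ε ≤ w(t)_k ≤ 1`, then for all `t ≥ 0`,
`z(t)ᵀ A⁻¹ z(t) ≤ (z(0)ᵀ A⁻¹ z(0)) · exp(−κ sin ε λ₁(A) t)`. -/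
theorem lyapunov_exponential_decay
    {m : ℕ} (A : Matrix (Fin m) (Fin m) ℝ) (hA : A.PosDef)
    (lam1 : ℝ) (hlam1 : lam1 = ⨅ k, hA.1.eigenvalues k) (hlam1pos : 0 < lam1)
    (κ ε : ℝ) (hκ : 0 < κ) (hε : 0 < ε) (hε2 : ε < Real.pi / 2)
    (w : ℝ → Fin m → ℝ) (hw : ∀ t k, Real.sin ε ≤ w t k ∧ w t k ≤ 1)
    (z zd : ℝ → Fin m → ℝ)
    (hz : ∀ t k, HasDerivAt (fun s => z s k) (zd t k) t)
    (hdyn : ∀ t, zd t = -κ • (A * Matrix.diagonal (w t)).mulVec (z t)) :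
    ∀ t, 0 ≤ t →
      z t ⬝ᵥ A⁻¹.mulVec (z t)
        ≤ (z 0 ⬝ᵥ A⁻¹.mulVec (z 0)) * Real.exp (-(κ * Real.sin ε * lam1) * t) :=
  lyapunov_exponential_decay_general A hA lam1 hlam1 κ ε hκ hε hε2 w hw z zd hz hdyn
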